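/- In the SAT reduction grammar, for every truth assignment σ to the variables v_1,…,v_n there is a derivation with yield c_0 v_1 ⋯ v_n v_{n+1} whose root category is [c_0] / [v_1=σ(v_1)] ⋯ / [v_n=σ(v_n)]; conversely, every derivation for this substring with target [c_0] has a root category of this form for some assignment σ. -/

import Mathlib

/-- Categories of VW-CCG over atomic categories coded by natural numbers.
`slash d X Y` is `X /ᵈ Y` where `d = true` is a forward slash `/` and
`d = false` is a backward slash `\`. -/
inductive Cat : Type where
  | atom : ℕ → Cat
  | slash : Bool → Cat → Cat → Cat
deriving DecidableEq

namespace Cat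

/-- The target (innermost atomic category). -/
def target : Cat → ℕ
  | atom a => a
  | slash _ X _ => X.target

/-- The argument stack of a category, bottom of the stack first. -/
def args : Cat → List (Bool × Cat)
  | atom _ => []
  | slash d X Y => X.args ++ [(d, Y)]

/-- The number of arguments of a category. -/
def numArgs (X : Cat) : ℕ := X.args.length

/-- The size (number of symbols) of a category. -/
def size : Cat → ℕ
  | atom _ => 1
  | slash _ X Y => X.size + Y.size + 1

/-- `ArgOccurs p X` holds if the slash–category pair `p` occurs as an
argument somewhere inside the category `X`. -/
def ArgOccurs (p : Bool × Cat) : Cat → Prop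
  | atom _ => False
  | slash d X Y => (d, Y) = p ∨ ArgOccurs p X ∨ ArgOccurs p Y

end Cat

/-- Build `A /₁ X₁ ⋯ /ₘ Xₘ` from a target and an argument list. -/
def Cat.mk' (t : ℕ) (as : List (Bool × Cat)) : Cat :=
  as.foldl (fun c p => Cat.slash p.1 c p.2) (Cat.atom t)

/-- Push additional arguments on the stack of a category. -/
def appendArgs (X : Cat) (zs : List (Bool × Cat)) : Cat :=
  zs.foldl (fun c p => Cat.slash p.1 c p.2) X

/-- A VW-CCG combinatory rule: a (forward or backward) combinatory schema of
degree `zRestr.length`, optionally restricting the target of the variable `X`,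
the category `Y`, and the slashes and categories of the arguments
`/₁ Z₁ ⋯ /_d Z_d` of the secondary input. -/
structure Rule where
  fwd : Bool
  tRestr : Option ℕ
  yRestr : Option Cat
  zRestr : List (Bool × Option Cat)

/-- The degree of a rule. -/
def Rule.degree (r : Rule) : ℕ := r.zRestr.length

/-- `r.Inst L R O` holds if `L R ⇛ O` is a ground instance of the rule `r`:
forward: `X/Y  Y/₁Z₁⋯/_dZ_d ⇛ X/₁Z₁⋯/_dZ_d`;
backward: `Y/₁Z₁⋯/_dZ_d  X\Y ⇛ X/₁Z₁⋯/_dZ_d`, respecting the restrictions. -/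
def Rule.Inst (r : Rule) (L R O : Cat) : Prop :=
  ∃ (X Y : Cat) (zs : List (Bool × Cat)),
    (∀ t, r.tRestr = some t → X.target = t) ∧
    (∀ Y', r.yRestr = some Y' → Y = Y') ∧
    List.Forall₂ (fun (p : Bool × Option Cat) (z : Bool × Cat) =>
      z.1 = p.1 ∧ ∀ Z, p.2 = some Z → z.2 = Z) r.zRestr zs ∧
    O = appendArgs X zs ∧
    (if r.fwd then L = Cat.slash true X Y ∧ R = appendArgs Y zs
     else R = Cat.slash false X Y ∧ L = appendArgs Y zs)

/-- A VW-CCG grammar: a finite lexicon assigning categories to vocabulary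
symbols (coded by naturals) or to the empty string (`none`), a finite set of
combinatory rules, and a distinguished atomic category. -/
structure Grammar where
  lex : List (Option ℕ × Cat)
  rules : List Rule
  start : ℕ

/-- A grammar is ε-free if no lexicon entry is for the empty string. -/
def Grammar.EpsFree (G : Grammar) : Prop := ∀ e ∈ G.lex, e.1 ≠ none

/-- Derivation trees: leaves carry lexicon entries (`none` = empty string),
internal nodes carry categories and have exactly two children. -/
inductive DTree where
  | leaf : Option ℕ → Cat → DTree
  | node : Cat → DTree → DTree → DTree

namespace DTree

/-- The category at the root. -/
def top : DTree → Cat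
  | leaf _ X => X
  | node X _ _ => X

/-- The yield: left-to-right concatenation of the symbols at the leaves. -/
def yield : DTree → List ℕ
  | leaf none _ => []
  | leaf (some σ) _ => [σ]
  | node _ l r => l.yield ++ r.yield

/-- The total number of nodes. -/
def nodes : DTree → ℕ
  | leaf _ _ => 1
  | node _ l r => l.nodes + r.nodes + 1

/-- `τ.Valid G`: `τ` is a derivation tree of the grammar `G`. -/
def Valid (G : Grammar) : DTree → Prop
  | leaf σ X => (σ, X) ∈ G.lex
  | node X l r => Valid G l ∧ Valid G r ∧ ∃ rl ∈ G.rules, rl.Inst l.top r.top X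

/-- `τ.CatAt C`: the category `C` labels some node of `τ`. -/
def CatAt : DTree → Cat → Prop
  | leaf _ X, C => C = X
  | node X l r, C => C = X ∨ l.CatAt C ∨ r.CatAt C

end DTree

/-- The language generated by a grammar. -/
def Grammar.Lang (G : Grammar) : Set (List ℕ) :=
  { w | ∃ τ : DTree, τ.Valid G ∧ τ.top = Cat.atom G.start ∧ τ.yield = w }

/-- CNF formulas: clauses are lists of literals (sign, variable index). -/
abbrev CNF := List (List (Bool × ℕ))

/-- Satisfiability of a CNF formula. -/
def CNF.Satisfiable (φ : CNF) : Prop :=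
  ∃ σ : ℕ → Bool, ∀ c ∈ φ, ∃ l ∈ c, σ l.2 = l.1

/-! Atomic categories of the SAT-reduction grammar (`m` = number of
clauses): `aCent` is `[¢]`, `aC i` is `[c_i]`, `aV m j b` is `[v_j = b]`. -/

def aCent : ℕ := 0
def aC (i : ℕ) : ℕ := 1 + i
def aV (m j : ℕ) (b : Bool) : ℕ := m + 2 + 2 * j + cond b 1 0

/-! Vocabulary symbols: `sC i` is `c_i`, `sV m j` is `v_j`, `sD m n j` is
`d_j`. -/

def sC (i : ℕ) : ℕ := i
def sV (m j : ℕ) : ℕ := m + j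
def sD (m n j : ℕ) : ℕ := m + n + 1 + j

/-- The secondary-input restriction `𝟙_j` / `𝟘_j`: `n` forward
slash–variable pairs with the `j`-th (1-based) position fixed to
`[v_j = b]`. -/
def oneHot (n m j : ℕ) (b : Bool) : List (Bool × Option Cat) :=
  (List.range n).map fun k =>
    (true, if k = j - 1 then some (Cat.atom (aV m j b)) else none)

/-- The ε-free VW-CCG grammar constructed from a CNF formula `φ` with `n`
variables in the NP-hardness reduction. -/
def satGrammar (n : ℕ) (φ : CNF) : Grammar :=
  let m := φ.length
  { lex :=
      -- c_0 := [c_0]/[¢]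
      (some (sC 0), Cat.slash true (Cat.atom (aC 0)) (Cat.atom aCent)) ::
      -- c_i := [c_i]/[c_{i−1}] for 1 ≤ i ≤ m
      (((List.range m).map fun i =>
          (some (sC (i + 1)), Cat.slash true (Cat.atom (aC (i + 1))) (Cat.atom (aC i)))) ++
       -- v_j := [¢]/[v_j=b]/[¢] for 1 ≤ j ≤ n, b ∈ {0,1}
       ((List.range n).flatMap fun j =>
          [true, false].map fun b =>
            (some (sV m (j + 1)),
              Cat.mk' aCent [(true, Cat.atom (aV m (j + 1) b)), (true, Cat.atom aCent)])) ++
       -- v_{n+1} := [¢]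
       [(some (sV m (n + 1)), Cat.atom aCent)] ++
       -- d_j := [v_j=b]
       ((List.range n).flatMap fun j =>
          [true, false].map fun b => (some (sD m n (j + 1)), Cat.atom (aV m (j + 1) b))))
    rules :=
      -- guessing: X/[¢]  [¢]/[v_j=b]/[¢] ⇒ X/[v_j=b]/[¢]
      ((List.range n).flatMap fun j =>
        [true, false].map fun b =>
          ⟨true, none, some (Cat.atom aCent),
            [(true, some (Cat.atom (aV m (j + 1) b))), (true, some (Cat.atom aCent))]⟩) ++
      -- X/[¢]  [¢] ⇒ X
      [⟨true, none, some (Cat.atom aCent), []⟩] ++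
      -- clause checking: X/[c_{i−1}]  [c_{i−1}] 𝟙_j ⇒ X 𝟙_j (v_j in c_i), etc.
      ((List.range m).flatMap fun i =>
        (φ.getD i []).map fun l =>
          ⟨true, none, some (Cat.atom (aC i)), oneHot n m l.2 l.1⟩) ++
      -- X/[v_j=b]  [v_j=b] ⇒ X
      ((List.range n).flatMap fun j =>
        [true, false].map fun b => ⟨true, none, some (Cat.atom (aV m (j + 1) b)), []⟩)
    start := aC m }

/-- The input string `w = c_m ⋯ c_1 c_0 v_1 ⋯ v_n v_{n+1} d_n ⋯ d_1` of the
reduction. -/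
def wSAT (m n : ℕ) : List ℕ :=
  ((List.range (m + 1)).reverse.map sC) ++
  ((List.range (n + 1)).map fun j => sV m (j + 1)) ++
  ((List.range n).reverse.map fun j => sD m n (j + 1))

/-- The category `[c_0] / [v_1=σ(v_1)] ⋯ / [v_n=σ(v_n)]` encoding the truth
assignment `σ`. -/
def guessTop (n m : ℕ) (σ : ℕ → Bool) : Cat :=
  Cat.mk' (aC 0) ((List.range n).map fun j => (true, Cat.atom (aV m (j + 1) (σ (j + 1)))))

/-- The substring `c_0 v_1 ⋯ v_n v_{n+1}`. -/
def wGuess (m n : ℕ) : List ℕ :=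
  sC 0 :: ((List.range (n + 1)).map fun j => sV m (j + 1))

/-!
Number the positions of `c_0 v_1 ⋯ v_n v_{n+1}` as `0, …, n + 1`. By induction on
derivations, a derivation of the segment of positions `a, …, a + len - 1` has category
`segCat m n σ a len` for some `σ`: target `[c_0]` if the segment starts at `c_0` and `[¢]`
otherwise, then `/[v_j=σ j]` for each `v_j` with `j ≤ n` in the segment, then `/[¢]` unless the
segment reaches `v_{n+1}`. The left part of a binary node misses `v_{n+1}`, so it ends in `/[¢]`;
as every rule is forward, the only possible step cancels this `[¢]` against the target of the
right part and appends the arguments of the right part, which preserves the invariant.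
Conversely, adding `v_1, …, v_{n+1}` to `c_0` one at a time realizes every `σ`.
-/

namespace Cat

theorem mk'_eq_appendArgs (t : ℕ) (l : List (Bool × Cat)) : Cat.mk' t l = appendArgs (atom t) l :=
  rfl

theorem args_appendArgs (X : Cat) (zs : List (Bool × Cat)) :
    (appendArgs X zs).args = X.args ++ zs := by
  induction zs generalizing X with
  | nil => simp [appendArgs]
  | cons z zs ih => exact (ih _).trans (by simp [args])

theorem args_mk' (t : ℕ) (l : List (Bool × Cat)) : (Cat.mk' t l).args = l := by
  simp [mk'_eq_appendArgs, args_appendArgs, args]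

theorem appendArgs_append (X : Cat) (l₁ l₂ : List (Bool × Cat)) :
    appendArgs X (l₁ ++ l₂) = appendArgs (appendArgs X l₁) l₂ := by
  simp [appendArgs, List.foldl_append]

end Cat

/-- The forward rule `X/Y  Y zs ⇒ X zs` with `Y` and all of `zs` fixed. -/
def Rule.fwdFixed (Y : Cat) (zs : List (Bool × Cat)) : Rule :=
  ⟨true, none, some Y, zs.map fun z => (z.1, some z.2)⟩

theorem Rule.fwdFixed_inst (X Y : Cat) (zs : List (Bool × Cat)) :
    (Rule.fwdFixed Y zs).Inst (.slash true X Y) (appendArgs Y zs) (appendArgs X zs) := by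
  refine ⟨X, Y, zs, by simp [fwdFixed], by simp [fwdFixed], ?_, rfl, by simp [fwdFixed]⟩
  exact List.forall₂_map_left_iff.mpr (List.forall₂_same.mpr fun _ _ => ⟨rfl, by simp⟩)

theorem Rule.Inst.exists_appendArgs_of_fwd {r : Rule} {X Y R O : Cat} (hr : r.fwd = true)
    (h : r.Inst (.slash true X Y) R O) : ∃ zs, R = appendArgs Y zs ∧ O = appendArgs X zs := by
  obtain ⟨X', Y', zs, -, -, -, hO, hLR⟩ := h
  rw [hr, if_pos rfl] at hLR
  obtain ⟨hL, hR⟩ := hLR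
  cases hL
  exact ⟨zs, hR, hO⟩

theorem DTree.yield_ne_nil {G : Grammar} (hG : G.EpsFree) {τ : DTree} (hτ : τ.Valid G) :
    τ.yield ≠ [] := by
  induction τ with
  | leaf o X =>
    cases o with
    | none => exact absurd rfl (hG _ hτ)
    | some s => simp [yield]
  | node X l r ihl _ => simp [yield, ihl hτ.1]

def guessSym (m j : ℕ) : ℕ := if j = 0 then sC 0 else sV m j

def assignArgs (m n : ℕ) (σ : ℕ → Bool) (a len : ℕ) : List (Bool × Cat) :=
  ((List.range' a len).filter fun j => 0 < j ∧ j ≤ n).map fun j => (true, Cat.atom (aV m j (σ j)))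

def segCore (m n : ℕ) (σ : ℕ → Bool) (a len : ℕ) : Cat :=
  Cat.mk' (if a = 0 then aC 0 else aCent) (assignArgs m n σ a len)

def segCat (m n : ℕ) (σ : ℕ → Bool) (a len : ℕ) : Cat :=
  appendArgs (segCore m n σ a len) (if a + len ≤ n + 1 then [(true, .atom aCent)] else [])

section Segments

variable {m n : ℕ} (σ : ℕ → Bool)

theorem assignArgs_add (a k k' : ℕ) :
    assignArgs m n σ a (k + k') = assignArgs m n σ a k ++ assignArgs m n σ (a + k) k' := by
  simp [assignArgs, ← List.range'_append_1]

theorem assignArgs_congr {σ' : ℕ → Bool} {a len : ℕ} (h : ∀ j, a ≤ j → j < a + len → σ j = σ' j) :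
    assignArgs m n σ a len = assignArgs m n σ' a len := by
  refine List.map_congr_left fun j hj => ?_
  obtain ⟨hj, -⟩ := List.mem_filter.mp hj
  rw [List.mem_range'_1] at hj
  rw [h j hj.1 hj.2]

theorem segCore_congr {σ' : ℕ → Bool} {a len : ℕ} (h : ∀ j, a ≤ j → j < a + len → σ j = σ' j) :
    segCore m n σ a len = segCore m n σ' a len := by
  rw [segCore, segCore, assignArgs_congr σ h]

theorem segCat_congr {σ' : ℕ → Bool} {a len : ℕ} (h : ∀ j, a ≤ j → j < a + len → σ j = σ' j) :
    segCat m n σ a len = segCat m n σ' a len := by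
  rw [segCat, segCat, segCore_congr σ h]

theorem segCat_eq_slash {a len : ℕ} (h : a + len ≤ n + 1) :
    segCat m n σ a len = .slash true (segCore m n σ a len) (.atom aCent) := by
  simp [segCat, h, appendArgs]

theorem segCat_add (a k k' : ℕ) :
    segCat m n σ a (k + k') = appendArgs (segCore m n σ a k) (segCat m n σ (a + k) k').args := by
  simp [segCat, segCore, Cat.mk'_eq_appendArgs, Cat.args_appendArgs, Cat.appendArgs_append,
    assignArgs_add, Cat.args, Nat.add_assoc]

theorem appendArgs_args_segCat {a : ℕ} (ha : a ≠ 0) (len : ℕ) :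
    appendArgs (.atom aCent) (segCat m n σ a len).args = segCat m n σ a len := by
  simp [segCat, segCore, ha, Cat.mk'_eq_appendArgs, Cat.args_appendArgs, Cat.appendArgs_append,
    Cat.args]

theorem segCat_zero_one : segCat m n σ 0 1 = .slash true (.atom (aC 0)) (.atom aCent) := by
  simp [segCat, segCore, assignArgs, Cat.mk', appendArgs]

theorem segCat_one_of_le {j : ℕ} (h0 : 0 < j) (h : j ≤ n) :
    segCat m n σ j 1 = Cat.mk' aCent [(true, .atom (aV m j (σ j))), (true, .atom aCent)] := by
  simp [segCat, segCore, assignArgs, Cat.mk', appendArgs, h0, h, h0.ne']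

theorem segCat_succ_one : segCat m n σ (n + 1) 1 = .atom aCent := by
  simp [segCat, segCore, assignArgs, Cat.mk', appendArgs]

theorem segCat_zero_add_two : segCat m n σ 0 (n + 2) = guessTop n m σ := by
  have hfilter : (List.range' 0 (n + 2)).filter (fun j => 0 < j ∧ j ≤ n) = List.range' 1 n := by
    rw [List.range'_succ, List.range'_concat]
    simp [List.filter_append, List.filter_eq_self]
    omega
  rw [segCat, if_neg (by omega), segCore, if_pos rfl, assignArgs, hfilter, List.range'_eq_map_range]
  simp [guessTop, appendArgs, Nat.add_comm, Function.comp_def]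

theorem map_guessSym_range' : (List.range' 0 (n + 2)).map (guessSym m) = wGuess m n := by
  rw [List.range'_succ, List.range'_eq_map_range]
  simp [wGuess, guessSym, Nat.add_comm]

end Segments

section Grammar

variable {n : ℕ} {φ : CNF}

theorem satGrammar_epsFree : (satGrammar n φ).EpsFree := by
  intro e he
  simp only [satGrammar, List.mem_cons, List.mem_append, List.mem_map, List.mem_flatMap,
    List.mem_range] at he
  aesop

theorem fwd_of_mem_satGrammar_rules {r : Rule} (hr : r ∈ (satGrammar n φ).rules) :
    r.fwd = true := by
  simp only [satGrammar, List.mem_cons, List.mem_append, List.mem_map, List.mem_flatMap,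
    List.mem_range] at hr
  aesop

theorem fwdFixed_segCat_mem_rules (σ : ℕ → Bool) {j : ℕ} (h0 : 0 < j) (h : j ≤ n + 1) :
    Rule.fwdFixed (.atom aCent) (segCat φ.length n σ j 1).args ∈ (satGrammar n φ).rules := by
  obtain ⟨i, rfl⟩ : ∃ i, j = i + 1 := ⟨j - 1, by omega⟩
  rcases h.lt_or_eq with h | h
  · rw [segCat_one_of_le σ h0 (by omega), Cat.args_mk']
    simp only [satGrammar, Rule.fwdFixed, List.mem_append, List.mem_flatMap, List.mem_map,
      List.mem_range]
    exact Or.inl (Or.inl (Or.inl ⟨i, by omega, σ (i + 1), by simp, rfl⟩))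
  · rw [Nat.succ_inj.mp h, segCat_succ_one]
    simp [satGrammar, Rule.fwdFixed, Cat.args]

theorem segCat_mem_lex (σ : ℕ → Bool) {a : ℕ} (ha : a ≤ n + 1) :
    (some (guessSym φ.length a), segCat φ.length n σ a 1) ∈ (satGrammar n φ).lex := by
  rcases Nat.eq_zero_or_pos a with rfl | h0
  · rw [segCat_zero_one]
    simp [satGrammar, guessSym]
  obtain ⟨i, rfl⟩ : ∃ i, a = i + 1 := ⟨a - 1, by omega⟩
  rcases ha.lt_or_eq with ha | ha
  · rw [segCat_one_of_le σ h0 (by omega)]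
    simp only [satGrammar, guessSym, List.mem_cons, List.mem_append, List.mem_flatMap,
      List.mem_map, List.mem_range]
    exact Or.inr (Or.inl (Or.inl (Or.inr ⟨i, by omega, σ (i + 1), by simp, rfl⟩)))
  · rw [Nat.succ_inj.mp ha, segCat_succ_one]
    simp [satGrammar, guessSym]

theorem exists_segCat_of_mem_lex {a : ℕ} (ha : a ≤ n + 1) {X : Cat}
    (h : (some (guessSym φ.length a), X) ∈ (satGrammar n φ).lex) :
    ∃ σ, X = segCat φ.length n σ a 1 := by
  simp only [satGrammar, List.mem_cons, List.mem_append, List.mem_map, List.mem_flatMap,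
    List.mem_range, List.not_mem_nil, or_false, Prod.mk.injEq, Option.some.injEq, guessSym, sC,
    sV, sD] at h
  rcases h with ⟨hs, rfl⟩ | ((⟨i, hi, hs, -⟩ | ⟨i, hi, b, -, hs, rfl⟩) | ⟨hs, rfl⟩) |
    ⟨i, -, b, -, hs, -⟩ <;> split_ifs at hs with ha0 <;> try omega
  · subst ha0
    exact ⟨fun _ => true, (segCat_zero_one _).symm⟩
  · obtain rfl : a = i + 1 := by omega
    exact ⟨fun _ => b, (segCat_one_of_le (fun _ => b) i.succ_pos hi).symm⟩
  · obtain rfl : a = n + 1 := by omega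
    exact ⟨fun _ => true, (segCat_succ_one _).symm⟩

theorem exists_segCat_of_inst {r : Rule} (hr : r ∈ (satGrammar n φ).rules) {σ₁ σ₂ : ℕ → Bool}
    {a k k' : ℕ} (hk : a + k ≤ n + 1) {O : Cat}
    (h : r.Inst (segCat φ.length n σ₁ a k) (segCat φ.length n σ₂ (a + k) k') O) :
    ∃ σ, O = segCat φ.length n σ a (k + k') := by
  rw [segCat_eq_slash σ₁ hk] at h
  obtain ⟨zs, hR, hO⟩ := h.exists_appendArgs_of_fwd (fwd_of_mem_satGrammar_rules hr)
  have hzs : zs = (segCat φ.length n σ₂ (a + k) k').args := by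
    simp [hR, Cat.args_appendArgs, Cat.args]
  refine ⟨fun j => if j < a + k then σ₁ j else σ₂ j, ?_⟩
  rw [hO, hzs, segCat_add, segCore_congr _ fun j _ hj => (if_pos hj).symm,
    segCat_congr _ fun j hj _ => (if_neg (Nat.not_lt.mpr hj)).symm]

theorem exists_inst_segCat (σ : ℕ → Bool) {a k : ℕ} (h0 : 0 < a + k) (h : a + k ≤ n + 1) :
    ∃ r ∈ (satGrammar n φ).rules,
      r.Inst (segCat φ.length n σ a k) (segCat φ.length n σ (a + k) 1)
        (segCat φ.length n σ a (k + 1)) := by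
  refine ⟨_, fwdFixed_segCat_mem_rules σ h0 h, ?_⟩
  rw [segCat_eq_slash σ h, segCat_add σ a k 1]
  nth_rw 2 [← appendArgs_args_segCat σ h0.ne' 1]
  exact Rule.fwdFixed_inst _ _ _

theorem exists_segCat_of_valid {τ : DTree} (hτ : τ.Valid (satGrammar n φ)) {a len : ℕ}
    (hy : τ.yield = (List.range' a len).map (guessSym φ.length)) (h : a + len ≤ n + 2) :
    ∃ σ, τ.top = segCat φ.length n σ a len := by
  induction τ generalizing a len with
  | leaf o X =>
    obtain ⟨s, rfl⟩ := Option.ne_none_iff_exists'.mp (satGrammar_epsFree _ hτ)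
    obtain rfl : len = 1 := by simpa [DTree.yield] using (congrArg List.length hy).symm
    obtain rfl : s = guessSym φ.length a := by simpa [DTree.yield] using hy
    exact exists_segCat_of_mem_lex (by omega) hτ
  | node X l r ihl ihr =>
    obtain ⟨hl, hr, rl, hrl, hinst⟩ := hτ
    obtain ⟨_, _, hsplit, hyl, hyr⟩ := List.map_eq_append_iff.mp hy.symm
    obtain ⟨k, hk, rfl, rfl⟩ := List.range'_eq_append_iff.mp hsplit
    have hk' : k < len := by
      by_contra hk'
      exact DTree.yield_ne_nil satGrammar_epsFree hr (by simp [← hyr, show len - k = 0 by omega])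
    obtain ⟨σ₁, hσ₁⟩ := ihl hl hyl.symm (by omega)
    obtain ⟨σ₂, hσ₂⟩ := ihr hr (by simpa using hyr.symm) (by omega)
    rw [hσ₁, hσ₂] at hinst
    obtain ⟨σ, hσ⟩ := exists_segCat_of_inst hrl (show a + k ≤ n + 1 by omega) hinst
    exact ⟨σ, by rw [DTree.top, hσ, Nat.add_sub_of_le hk]⟩

theorem exists_valid_segCat_zero (σ : ℕ → Bool) {k : ℕ} (hk : k ≤ n + 1) :
    ∃ τ : DTree, τ.Valid (satGrammar n φ) ∧
      τ.yield = (List.range' 0 (k + 1)).map (guessSym φ.length) ∧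
      τ.top = segCat φ.length n σ 0 (k + 1) := by
  induction k with
  | zero =>
    exact ⟨.leaf _ _, segCat_mem_lex σ (Nat.zero_le _), by simp [DTree.yield], rfl⟩
  | succ k ih =>
    obtain ⟨τ, hτ, hy, htop⟩ := ih (by omega)
    refine ⟨.node (segCat φ.length n σ 0 (k + 1 + 1)) τ
      (.leaf (some (guessSym φ.length (k + 1))) (segCat φ.length n σ (k + 1) 1)),
      ⟨hτ, segCat_mem_lex σ hk, ?_⟩, ?_, rfl⟩
    · rw [htop]
      have hk' : 0 + (k + 1) ≤ n + 1 := by omega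
      simpa only [Nat.zero_add, DTree.top] using exists_inst_segCat (φ := φ) σ (by omega) hk'
    · simp [DTree.yield, hy, List.range'_concat]

end Grammar

/-- Part 1 of the SAT reduction: for every truth assignment `σ` there is a
derivation with yield `c_0 v_1 ⋯ v_n v_{n+1}` whose root category is
`[c_0] / [v_1=σ(v_1)] ⋯ / [v_n=σ(v_n)]`; conversely, every derivation for
this substring whose root category has target `[c_0]` has a root category of
this form for some assignment `σ`. -/
theorem guessing_correct (n : ℕ) (φ : CNF) :
    (∀ σ : ℕ → Bool, ∃ τ : DTree, τ.Valid (satGrammar n φ) ∧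
        τ.yield = wGuess φ.length n ∧ τ.top = guessTop n φ.length σ) ∧
    (∀ τ : DTree, τ.Valid (satGrammar n φ) → τ.yield = wGuess φ.length n →
        τ.top.target = aC 0 → ∃ σ : ℕ → Bool, τ.top = guessTop n φ.length σ) := by
  refine ⟨fun σ => ?_, fun τ hτ hy _ => ?_⟩
  · obtain ⟨τ, hτ, hy, htop⟩ := exists_valid_segCat_zero (φ := φ) σ (le_refl (n + 1))
    exact ⟨τ, hτ, hy.trans map_guessSym_range', htop.trans (segCat_zero_add_two σ)⟩
  · obtain ⟨σ, htop⟩ := exists_segCat_of_valid hτ (hy.trans map_guessSym_range'.symm) (by omega)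
    exact ⟨σ, htop.trans (segCat_zero_add_two σ)⟩
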